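/- Let (ē*, f̄*, ā*) be optimal for the relaxed problem with rewards c_{ij} > 0. If ā*_i < 1 for all 1 ≤ i ≤ r, then ē*_{ii} = 0 for all 1 ≤ i ≤ r; in particular (ē*, f̄*, ā*) also satisfies the complementarity constraint. -/

import Mathlib

/-
The relaxed constraints other than the normalisation `(ē, f̄) ∈ 𝒯` are homogeneous in
`(ē, f̄, ā)` and never involve a diagonal entry `ē_ii`, which can therefore absorb any leftover
mass. If `ē_ii > 0` and every `ā_j < 1`, then for some `t > 1` the point `(t ē, t f̄, t ā)` with
`ē_ii` lowered to `1 - t (1 - ē_ii)` is still feasible and has `t` times the reward. The optimal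
reward is positive (serving customers at station `i` alone is feasible), which contradicts
optimality.
-/

open Finset Filter Topology MeasureTheory

abbrev Mat (r : ℕ) := Fin r → Fin r → ℝ

/-- The network primitives: per-car arrival rates `lam`, travel rates `mu`,
and the row-stochastic destination matrix `P`. -/
structure NetParams (r : ℕ) where
  lam : Fin r → ℝ
  mu : Mat r
  P : Mat r
  lam_pos : ∀ i, 0 < lam i
  mu_pos : ∀ i j, 0 < mu i j
  P_nonneg : ∀ i j, 0 ≤ P i j
  P_rowsum : ∀ i, ∑ j, P i j = 1

/-- `q` is a routing matrix: nonnegative entries with rows summing to one. -/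
def IsRouting {r : ℕ} (q : Mat r) : Prop :=
  (∀ i j, 0 ≤ q i j) ∧ ∀ i, ∑ j, q i j = 1

/-- `(e, f)` belongs to the set 𝒯. -/
def MemT {r : ℕ} (e f : Mat r) : Prop :=
  (∀ i j, e i j ∈ Set.Icc (0:ℝ) 1) ∧ (∀ i j, f i j ∈ Set.Icc (0:ℝ) 1) ∧
    (∑ i, ∑ j, (e i j + f i j)) = 1

/-- `(q, ebar, fbar, abar)` is feasible for the fluid-based optimization problem. -/
def FluidFeasible {r : ℕ} (np : NetParams r) (q ebar fbar : Mat r)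
    (abar : Fin r → ℝ) : Prop :=
  IsRouting q ∧
  (∀ i j, np.lam i * np.P i j * abar i = np.mu i j * fbar i j) ∧
  (∀ i j, i ≠ j → np.mu i j * ebar i j = q i j * ∑ k, np.mu k i * fbar k i) ∧
  (∀ i, np.lam i * abar i =
    (∑ k ∈ Finset.univ.filter (fun k => k ≠ i), np.mu k i * ebar k i)
      + q i i * ∑ k, np.mu k i * fbar k i) ∧
  (∀ i, (1 - abar i) * ebar i i = 0) ∧
  MemT ebar fbar ∧
  (∀ i, 0 ≤ abar i ∧ abar i ≤ 1)

/-- The objective value `U(ā) = Σ_{i,j} ā_i λ_i P_{ij} c_{ij}`. -/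
noncomputable def objU {r : ℕ} (np : NetParams r) (c : Mat r) (abar : Fin r → ℝ) : ℝ :=
  ∑ i, ∑ j, abar i * np.lam i * np.P i j * c i j

/-- `(ebar, fbar, abar)` satisfies the relaxed constraints. -/
def RelaxedFeasible {r : ℕ} (np : NetParams r) (ebar fbar : Mat r)
    (abar : Fin r → ℝ) : Prop :=
  (∀ i j, np.lam i * np.P i j * abar i = np.mu i j * fbar i j) ∧
  (∀ i j, i ≠ j → np.mu i j * ebar i j ≤ ∑ k, np.mu k i * fbar k i) ∧
  (∀ i, (∑ k ∈ Finset.univ.filter (fun k => k ≠ i), np.mu k i * ebar k i)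
      ≤ np.lam i * abar i) ∧
  (∀ i, np.lam i * abar i ≤
    (∑ k ∈ Finset.univ.filter (fun k => k ≠ i), np.mu k i * ebar k i)
      + ∑ k, np.mu k i * fbar k i) ∧
  (∀ i, np.lam i * abar i
      + (∑ j ∈ Finset.univ.filter (fun j => j ≠ i), np.mu i j * ebar i j)
    = (∑ k ∈ Finset.univ.filter (fun k => k ≠ i), np.mu k i * ebar k i)
      + ∑ k, np.mu k i * fbar k i) ∧
  MemT ebar fbar ∧
  (∀ i, 0 ≤ abar i ∧ abar i ≤ 1)

/-- The complementarity constraint `(1 − ā_i) ē_{ii} = 0` for all `i`. -/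
def Complementarity {r : ℕ} (ebar : Mat r) (abar : Fin r → ℝ) : Prop :=
  ∀ i, (1 - abar i) * ebar i i = 0

/-- The homogeneous relaxed constraints, less the upper bound on `λ_i a_i`, which follows
from `balance` when `e ≥ 0`. -/
structure FlowBalanced {r : ℕ} (np : NetParams r) (e f : Mat r) (a : Fin r → ℝ) : Prop where
  rate_eq : ∀ i j, np.lam i * np.P i j * a i = np.mu i j * f i j
  relocation_le : ∀ i j, i ≠ j → np.mu i j * e i j ≤ ∑ k, np.mu k i * f k i
  inflow_le : ∀ i,
    (∑ k ∈ univ.filter (fun k => k ≠ i), np.mu k i * e k i) ≤ np.lam i * a i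
  balance : ∀ i, np.lam i * a i + (∑ j ∈ univ.filter (fun j => j ≠ i), np.mu i j * e i j)
    = (∑ k ∈ univ.filter (fun k => k ≠ i), np.mu k i * e k i) + ∑ k, np.mu k i * f k i

section FlowBalanced

variable {r : ℕ} {np : NetParams r} {e e' f : Mat r} {a : Fin r → ℝ}

theorem RelaxedFeasible.flowBalanced (h : RelaxedFeasible np e f a) :
    FlowBalanced np e f a :=
  ⟨h.1, h.2.1, h.2.2.1, h.2.2.2.2.1⟩

theorem FlowBalanced.smul (h : FlowBalanced np e f a) {t : ℝ} (ht : 0 ≤ t) :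
    FlowBalanced np (t • e) (t • f) (t • a) := by
  have hsum : ∀ (s : Finset (Fin r)) (g x : Fin r → ℝ),
      ∑ k ∈ s, g k * (t * x k) = t * ∑ k ∈ s, g k * x k := fun s g x => by
    rw [Finset.mul_sum]; exact Finset.sum_congr rfl fun k _ => by ring
  refine ⟨fun i j => ?_, fun i j hij => ?_, fun i => ?_, fun i => ?_⟩ <;>
    simp only [Pi.smul_apply, smul_eq_mul, hsum]
  · linear_combination t * h.rate_eq i j
  · simpa only [mul_left_comm _ t] using mul_le_mul_of_nonneg_left (h.relocation_le i j hij) ht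
  · simpa only [mul_left_comm _ t] using mul_le_mul_of_nonneg_left (h.inflow_le i) ht
  · linear_combination t * h.balance i

theorem FlowBalanced.congr_offDiag (h : FlowBalanced np e f a)
    (he : ∀ i j, i ≠ j → e' i j = e i j) : FlowBalanced np e' f a := by
  have hin : ∀ i, ∑ k ∈ univ.filter (fun k => k ≠ i), np.mu k i * e' k i
      = ∑ k ∈ univ.filter (fun k => k ≠ i), np.mu k i * e k i := fun i =>
    Finset.sum_congr rfl fun k hk => by rw [he k i (Finset.mem_filter.1 hk).2]
  have hout : ∀ i, ∑ j ∈ univ.filter (fun j => j ≠ i), np.mu i j * e' i j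
      = ∑ j ∈ univ.filter (fun j => j ≠ i), np.mu i j * e i j := fun i =>
    Finset.sum_congr rfl fun j hj => by rw [he i j (Finset.mem_filter.1 hj).2.symm]
  refine ⟨h.rate_eq, fun i j hij => ?_, fun i => ?_, fun i => ?_⟩
  · rw [he i j hij]; exact h.relocation_le i j hij
  · rw [hin]; exact h.inflow_le i
  · rw [hin, hout]; exact h.balance i

end FlowBalanced

theorem memT_of_nonneg {r : ℕ} {e f : Mat r} (he : ∀ i j, 0 ≤ e i j) (hf : ∀ i j, 0 ≤ f i j)
    (hsum : ∑ i, ∑ j, (e i j + f i j) = 1) : MemT e f := by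
  have hle : ∀ i j, e i j + f i j ≤ 1 := fun i j => hsum ▸
    (Finset.single_le_sum (fun j _ => add_nonneg (he i j) (hf i j)) (Finset.mem_univ j)).trans
      (Finset.single_le_sum (fun i _ => Finset.sum_nonneg fun j _ => add_nonneg (he i j) (hf i j))
        (Finset.mem_univ i))
  exact ⟨fun i j => ⟨he i j, by linarith [hf i j, hle i j]⟩,
    fun i j => ⟨hf i j, by linarith [he i j, hle i j]⟩, hsum⟩

/-- The missing mass is parked on a diagonal entry of `e`, which the homogeneous
constraints do not see. -/
theorem FlowBalanced.exists_relaxedFeasible {r : ℕ} [Nonempty (Fin r)] {np : NetParams r}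
    {e f : Mat r} {a : Fin r → ℝ} (h : FlowBalanced np e f a)
    (he : ∀ i j, 0 ≤ e i j) (hf : ∀ i j, 0 ≤ f i j) (ha : ∀ i, 0 ≤ a i ∧ a i ≤ 1)
    (hmass : ∑ i, ∑ j, (e i j + f i j) ≤ 1) : ∃ e', RelaxedFeasible np e' f a := by
  set i₀ : Fin r := Classical.arbitrary _
  set e' : Mat r := fun i j =>
    e i j + if i = i₀ ∧ j = i₀ then 1 - ∑ i, ∑ j, (e i j + f i j) else 0
  have h' : FlowBalanced np e' f a := h.congr_offDiag fun i j hij => by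
    rw [add_eq_left, if_neg fun h : i = i₀ ∧ j = i₀ => hij (h.1.trans h.2.symm)]
  have he' : ∀ i j, 0 ≤ e' i j := fun i j => add_nonneg (he i j) (by split_ifs <;> linarith)
  have hsum : ∑ i, ∑ j, (e' i j + f i j) = 1 := by
    simp only [e', Finset.sum_add_distrib, ite_and, add_right_comm (e _ _), Finset.sum_ite_irrel,
      Finset.sum_ite_eq', Finset.mem_univ, if_true, Finset.sum_const_zero, add_sub_cancel]
  refine ⟨e', h.rate_eq, h'.relocation_le, h'.inflow_le, fun i => ?_, h'.balance,
    memT_of_nonneg he' hf hsum, ha⟩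
  have hout := Finset.sum_nonneg fun j (_ : j ∈ univ.filter (fun j => j ≠ i)) =>
    mul_nonneg (np.mu_pos i j).le (he' i j)
  linarith [h'.balance i]

/-- Customers are served at station `i₀` only, and every car returns to `i₀` empty. -/
theorem flowBalanced_singleStation {r : ℕ} (np : NetParams r) (i₀ : Fin r) :
    FlowBalanced np (fun i j => if j = i₀ then np.lam i₀ * np.P i₀ i / np.mu i i₀ else 0)
      (fun i j => if i = i₀ then np.lam i₀ * np.P i₀ j / np.mu i₀ j else 0)
      (fun i => if i = i₀ then 1 else 0) := by
  set w : Fin r → ℝ := fun k => np.lam i₀ * np.P i₀ k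
  have hf : ∀ k i, np.mu k i * (if k = i₀ then np.lam i₀ * np.P i₀ i / np.mu i₀ i else 0)
      = if k = i₀ then w i else 0 := fun k i => by
    split_ifs with hk
    · subst hk; simp only [w]; field_simp [(np.mu_pos k i).ne']
    · rw [mul_zero]
  have he : ∀ k i, np.mu k i * (if i = i₀ then np.lam i₀ * np.P i₀ k / np.mu k i₀ else 0)
      = if i = i₀ then w k else 0 := fun k i => by
    split_ifs with hi
    · subst hi; simp only [w]; field_simp [(np.mu_pos k i).ne']
    · rw [mul_zero]
  have hrow : ∑ k ∈ univ.filter (fun k => k ≠ i₀), w k + w i₀ = np.lam i₀ := by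
    rw [Finset.filter_ne', Finset.sum_erase_add _ _ (Finset.mem_univ _), ← Finset.mul_sum,
      np.P_rowsum, mul_one]
  have hw : ∀ k, 0 ≤ w k := fun k => mul_nonneg (np.lam_pos i₀).le (np.P_nonneg i₀ k)
  refine ⟨fun i j => ?_, fun i j hij => ?_, fun i => ?_, fun i => ?_⟩ <;>
    simp only [hf, he, Finset.sum_ite_eq', Finset.mem_univ, if_true, Finset.sum_ite_irrel,
      Finset.sum_const_zero, Finset.mem_filter, true_and]
  · split_ifs with hi
    · subst hi; simp only [w, mul_one]
    · rw [mul_zero]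
  · split_ifs
    exacts [le_rfl, hw i]
  · split_ifs with hi
    · subst hi; linarith [hw i]
    · rw [mul_zero]
  · split_ifs with hi hi' hi'
    · exact absurd hi.symm hi'
    · subst hi; linarith
    · simp only [w, mul_zero, zero_add]
    · exact (hi' (Ne.symm hi)).elim

section Objective

variable {r : ℕ} (np : NetParams r) {c : Mat r}

theorem objU_smul (t : ℝ) (a : Fin r → ℝ) : objU np c (t • a) = t * objU np c a := by
  simp only [objU, Pi.smul_apply, smul_eq_mul, Finset.mul_sum, mul_assoc]

theorem objU_pos (hc : ∀ i j, 0 < c i j) {a : Fin r → ℝ} (ha : ∀ i, 0 ≤ a i) {i₀ : Fin r}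
    (hi₀ : 0 < a i₀) : 0 < objU np c a := by
  obtain ⟨j₀, -, hj₀⟩ := Finset.exists_lt_of_sum_lt (s := univ) (f := 0) (g := np.P i₀)
    (by simp only [Pi.zero_apply, Finset.sum_const_zero, np.P_rowsum, zero_lt_one])
  have hterm : ∀ i j, 0 ≤ a i * np.lam i * np.P i j * c i j := fun i j =>
    mul_nonneg (mul_nonneg (mul_nonneg (ha i) (np.lam_pos i).le) (np.P_nonneg i j)) (hc i j).le
  exact Finset.sum_pos' (fun i _ => Finset.sum_nonneg fun j _ => hterm i j)
    ⟨i₀, Finset.mem_univ _, Finset.sum_pos' (fun j _ => hterm i₀ j) ⟨j₀, Finset.mem_univ _,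
      mul_pos (mul_pos (mul_pos hi₀ (np.lam_pos i₀)) hj₀) (hc i₀ j₀)⟩⟩

end Objective

theorem exists_relaxedFeasible_objU_pos {r : ℕ} (np : NetParams r) {c : Mat r}
    (hc : ∀ i j, 0 < c i j) (i₀ : Fin r) :
    ∃ e f a, RelaxedFeasible np e f a ∧ 0 < objU np c a := by
  have : Nonempty (Fin r) := ⟨i₀⟩
  set e : Mat r := fun i j => if j = i₀ then np.lam i₀ * np.P i₀ i / np.mu i i₀ else 0
  set f : Mat r := fun i j => if i = i₀ then np.lam i₀ * np.P i₀ j / np.mu i₀ j else 0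
  set a : Fin r → ℝ := fun i => if i = i₀ then 1 else 0
  have he : ∀ i j, 0 ≤ e i j := fun i j => by
    simp only [e]; split_ifs
    · exact div_nonneg (mul_nonneg (np.lam_pos i₀).le (np.P_nonneg i₀ i)) (np.mu_pos i i₀).le
    · exact le_rfl
  have hf : ∀ i j, 0 ≤ f i j := fun i j => by
    simp only [f]; split_ifs
    · exact div_nonneg (mul_nonneg (np.lam_pos i₀).le (np.P_nonneg i₀ j)) (np.mu_pos i₀ j).le
    · exact le_rfl
  have ha : ∀ i, 0 ≤ a i ∧ a i ≤ 1 := fun i => by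
    simp only [a]; split_ifs <;> norm_num
  set S := ∑ i, ∑ j, (e i j + f i j)
  have hS : 0 ≤ S :=
    Finset.sum_nonneg fun i _ => Finset.sum_nonneg fun j _ => add_nonneg (he i j) (hf i j)
  set s := (1 + S)⁻¹
  have hs : 0 < s := by positivity
  have hs1 : s ≤ 1 := inv_le_one_of_one_le₀ (by linarith)
  have hsS : s * S ≤ 1 := by
    rw [inv_mul_le_iff₀ (by positivity)]; linarith
  obtain ⟨e', he'⟩ := ((flowBalanced_singleStation np i₀).smul hs.le).exists_relaxedFeasible
    (fun i j => mul_nonneg hs.le (he i j)) (fun i j => mul_nonneg hs.le (hf i j))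
    (fun i => ⟨mul_nonneg hs.le (ha i).1, mul_le_one₀ hs1 (ha i).1 (ha i).2⟩)
    (by simpa only [Pi.smul_apply, smul_eq_mul, ← mul_add, ← Finset.mul_sum] using hsS)
  refine ⟨e', _, _, he', ?_⟩
  rw [objU_smul]
  exact mul_pos hs (objU_pos np hc (fun i => (ha i).1) (i₀ := i₀) (by simp))

/-- Scaling a feasible point by `t` frees the mass `1 - t * (1 - e i₀ i₀)` once the diagonal
entry `e i₀ i₀` is dropped; it is put back on that entry. -/
theorem RelaxedFeasible.exists_smul {r : ℕ} {np : NetParams r} {e f : Mat r} {a : Fin r → ℝ}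
    (h : RelaxedFeasible np e f a) {t : ℝ} (ht : 0 ≤ t) (hta : ∀ i, t * a i ≤ 1) (i₀ : Fin r)
    (hte : t * (1 - e i₀ i₀) ≤ 1) : ∃ e', RelaxedFeasible np e' (t • f) (t • a) := by
  have : Nonempty (Fin r) := ⟨i₀⟩
  obtain ⟨he, hf, hsum⟩ := h.2.2.2.2.2.1
  set d : Mat r := fun i j => e i j - if i = i₀ ∧ j = i₀ then e i₀ i₀ else 0
  have hd : ∀ i j, 0 ≤ d i j := fun i j => by
    simp only [d]; split_ifs with hij
    · rw [hij.1, hij.2, sub_self]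
    · rw [sub_zero]; exact (he i j).1
  have hmass : ∑ i, ∑ j, (d i j + f i j) = 1 - e i₀ i₀ := by
    simp only [d, sub_add_eq_add_sub, Finset.sum_sub_distrib, ite_and, Finset.sum_ite_irrel,
      Finset.sum_ite_eq', Finset.mem_univ, if_true, Finset.sum_const_zero, hsum]
  refine ((h.flowBalanced.congr_offDiag fun i j hij => ?_).smul ht).exists_relaxedFeasible
    (fun i j => mul_nonneg ht (hd i j)) (fun i j => mul_nonneg ht (hf i j).1)
    (fun i => ⟨mul_nonneg ht (h.2.2.2.2.2.2 i).1, hta i⟩)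
    (by simpa only [Pi.smul_apply, smul_eq_mul, ← mul_add, ← Finset.mul_sum, hmass] using hte)
  rw [sub_eq_self, if_neg fun h : i = i₀ ∧ j = i₀ => hij (h.1.trans h.2.symm)]

theorem eventually_mul_lt_one {x : ℝ} (hx : x < 1) : ∀ᶠ t in 𝓝 (1 : ℝ), t * x < 1 :=
  (continuous_mul_const x).continuousAt.eventually_lt continuousAt_const (by rwa [one_mul])

theorem stmt_4_general {r : ℕ} (np : NetParams r) (c : Mat r)
    (hc : ∀ i j, 0 < c i j)
    (ebar fbar : Mat r) (abar : Fin r → ℝ)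
    (hfeas : RelaxedFeasible np ebar fbar abar)
    (hopt : ∀ (e' f' : Mat r) (a' : Fin r → ℝ),
      RelaxedFeasible np e' f' a' → objU np c a' ≤ objU np c abar)
    (hlt : ∀ i, abar i < 1) :
    (∀ i, ebar i i = 0) ∧ Complementarity ebar abar := by
  have hdiag : ∀ i₀, ebar i₀ i₀ = 0 := by
    intro i₀
    by_contra hne
    have hpos : 0 < ebar i₀ i₀ := lt_of_le_of_ne (hfeas.2.2.2.2.2.1.1 i₀ i₀).1 (Ne.symm hne)
    obtain ⟨e, f, a, hfa, hUa⟩ := exists_relaxedFeasible_objU_pos np hc i₀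
    have hU : 0 < objU np c abar := hUa.trans_le (hopt e f a hfa)
    obtain ⟨t, ht, hta, hte⟩ : ∃ t : ℝ, 1 < t ∧ (∀ i, t * abar i < 1) ∧ t * (1 - ebar i₀ i₀) < 1 :=
      ((eventually_mem_nhdsWithin : ∀ᶠ t in 𝓝[>] (1 : ℝ), t ∈ Set.Ioi 1).and
        (((eventually_all.2 fun i => eventually_mul_lt_one (hlt i)).and
          (eventually_mul_lt_one (by linarith))).filter_mono nhdsWithin_le_nhds)).exists
    obtain ⟨e', he'⟩ := hfeas.exists_smul (by linarith) (fun i => (hta i).le) i₀ hte.le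
    have hscaled : t * objU np c abar ≤ objU np c abar := objU_smul np t abar ▸ hopt _ _ _ he'
    nlinarith
  exact ⟨hdiag, fun i => by rw [hdiag i, mul_zero]⟩

/-- Lemma 2, part 1: if an optimal solution of the relaxed problem has `ā_i < 1`
for all `i`, then `ē_{ii} = 0` for all `i`; in particular it satisfies the
complementarity constraint. -/
theorem stmt_4 {r : ℕ} (hr : 1 ≤ r) (np : NetParams r) (c : Mat r)
    (hc : ∀ i j, 0 < c i j)
    (ebar fbar : Mat r) (abar : Fin r → ℝ)
    (hfeas : RelaxedFeasible np ebar fbar abar)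
    (hopt : ∀ (e' f' : Mat r) (a' : Fin r → ℝ),
      RelaxedFeasible np e' f' a' → objU np c a' ≤ objU np c abar)
    (hlt : ∀ i, abar i < 1) :
    (∀ i, ebar i i = 0) ∧ Complementarity ebar abar :=
  stmt_4_general np c hc ebar fbar abar hfeas hopt hlt
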